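/- arXiv:2603.20787 — 2 statements merged into one kernel-verified Lean document; each statement's English description precedes it below -/
import Mathlib

section
/- Let H : S → BG be a functor from a finite groupoid S, and let (id_S, e)_* be the identity G-span from (S,H) to (S,H): apex S, both legs the identity functor, and ε the constant function with value the identity element e of G. Then its matrix [(id_S,e)_*] : π₀(S) × π₀(S) → ℚG is diagonal with [(id_S,e)_*](c,d) = 0 for non-isomorphic c, d, its diagonal entries are [(id_S,e)_*](c,c) = overline{H(Aut_S(c))} := |H(Aut_S(c))|⁻¹ · Σ_{g ∈ H(Aut_S(c))} g, and the matrix is idempotent: [(id_S,e)_*]·[(id_S,e)_*] = [(id_S,e)_*]. -/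
open CategoryTheory

noncomputable section

/-- The component set `π₀(C)`: isomorphism classes of objects of `C`. -/
abbrev Pi0 (C : Type*) [Category C] := Quotient (isIsomorphicSetoid C)

/-- Groupoid cardinality (Euler characteristic): the sum, over a set of representatives of
the isomorphism classes of objects, of the reciprocals of the orders of the automorphism
groups. -/
noncomputable def gcard (C : Type*) [Category C] : ℚ :=
  ∑ᶠ x : Pi0 C, (Nat.card (Aut (Quotient.out x)) : ℚ)⁻¹

/-- A functor into the one-object groupoid `BG`, identified with an assignment of elements
of `G` to morphisms (composition goes to multiplication in reverse order, matching the
convention `f ≫ g ↦ g·f` of `BG`). -/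
structure GFunctor (S : Type*) [Category S] (G : Type*) [Group G] where
  map : ∀ {a b : S}, (a ⟶ b) → G
  map_id : ∀ a : S, map (𝟙 a) = 1
  map_comp : ∀ {a b c : S} (f : a ⟶ b) (g : b ⟶ c), map (f ≫ g) = map g * map f

/-- The two-sided homotopy fibre `c\M/d` of a span `S ⟵L M ⟶R T`: objects are triples
`(s, a, t)` with `s : c ⟶ L a` and `t : R a ⟶ d`; morphisms are morphisms `m : a₁ ⟶ a₂`
of `M` with `L m ∘ s₁ = s₂` and `t₂ ∘ R m = t₁`. -/
abbrev TwoFibre {S T M : Type*} [Category S] [Category T] [Category M]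
    (L : M ⥤ S) (R : M ⥤ T) (c : S) (d : T) :=
  StructuredArrow c (CostructuredArrow.proj R d ⋙ L)

/-- The induced function `c\ε/d` on the two-sided homotopy fibre:
`(s,a,t) ↦ V(t)·ε(a)·H(s)`. -/
def twoEps {S T M : Type*} [Category S] [Category T] [Category M]
    {G : Type*} [Group G] (H : GFunctor S G) (V : GFunctor T G)
    (L : M ⥤ S) (R : M ⥤ T) (ε : M → G) {c : S} {d : T}
    (x : TwoFibre L R c d) : G :=
  V.map x.right.hom * ε x.right.left * H.map x.hom

/-- The matrix `[M, ε] : π₀(S) × π₀(T) → ℚG` of a `G`-span: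
`[M,ε](c,d) = |Aut_T(d)|⁻¹ · ∑_{g ∈ G} χ((c\M/d){c\ε/d = g}) · g`. -/
noncomputable def spanMatrix {S T M : Type*} [Category S] [Category T] [Category M]
    {G : Type*} [CommGroup G] [Fintype G]
    (H : GFunctor S G) (V : GFunctor T G)
    (L : M ⥤ S) (R : M ⥤ T) (ε : M → G)
    (c : Pi0 S) (d : Pi0 T) : MonoidAlgebra ℚ G :=
  ∑ g : G, MonoidAlgebra.single g
    ((Nat.card (Aut (Quotient.out d)) : ℚ)⁻¹ *
      gcard (ObjectProperty.FullSubcategory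
        (fun x : TwoFibre L R (Quotient.out c) (Quotient.out d) =>
          twoEps H V L R ε x = g)))

/-!
For the identity span the homotopy fibre `c\S/d` is a thin groupoid whose components are the
arrows `c ⟶ d` (an object `(s, a, t)` is determined up to unique isomorphism by `s ≫ t`), and
`c\ε/d` is `H` applied to that arrow. So `χ((c\S/d){c\ε/d = g})` counts the arrows `c ⟶ d` with
`H`-value `g`. There are none unless `c ≅ d`; for `c = d` they form a coset of the kernel of
`H : Aut(c) → G` when `g` lies in the image `U`, so dividing by `|Aut(c)| = |U| · |ker|` leaves
`|U|⁻¹` on each `g ∈ U`, i.e. `overline{U}`. Idempotence of a diagonal matrix reduces to that of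
its entries, and `overline{U}² = overline{U}` because `u · ∑_{v ∈ U} v = ∑_{v ∈ U} v` for `u ∈ U`.
-/

theorem finsum_const_eq_natCard_smul {α M : Type*} [AddCommMonoid M] (a : M) :
    ∑ᶠ _ : α, a = Nat.card α • a := by
  rcases finite_or_infinite α with hα | hα
  · have := Fintype.ofFinite α
    rw [finsum_eq_sum_of_fintype, Finset.sum_const, Finset.card_univ, Nat.card_eq_fintype_card]
  · rcases eq_or_ne a 0 with rfl | ha
    · simp
    · rw [finsum_of_infinite_support, Nat.card_eq_zero_of_infinite, zero_smul]
      rwa [Function.support_const ha, Set.infinite_univ_iff]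

theorem finsum_subtype_eq_sum_indicator {α M S : Type*} [AddCommMonoid M] [Fintype α]
    [SetLike S α] (s : S) (f : α → M) : ∑ᶠ a : s, f a = ∑ a, (s : Set α).indicator f a := by
  rw [finsum_subtype_eq_finsum_cond]
  exact (finsum_mem_def (s : Set α) f).trans (finsum_eq_sum_of_fintype _)

section Average

variable (k : Type*) {G : Type*} [Field k] [Group G]

/-- `overline{U} = |U|⁻¹ ∑_{u ∈ U} u`. -/
def Subgroup.average (U : Subgroup G) : MonoidAlgebra k G :=
  (Nat.card U : k)⁻¹ • ∑ᶠ u : U, MonoidAlgebra.of k G u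

variable {k}

theorem Subgroup.of_mul_finsum_of_mem {U : Subgroup G} [Finite U] {u : G} (hu : u ∈ U) :
    MonoidAlgebra.of k G u * ∑ᶠ v : U, MonoidAlgebra.of k G v =
      ∑ᶠ v : U, MonoidAlgebra.of k G v := by
  rw [mul_finsum' _ _ (Set.toFinite _)]
  simp_rw [← map_mul]
  exact finsum_comp_equiv (Equiv.mulLeft (⟨u, hu⟩ : U)) (f := fun v : U => MonoidAlgebra.of k G v)

theorem Subgroup.finsum_of_mul_finsum_of (U : Subgroup G) [Finite U] :
    (∑ᶠ v : U, MonoidAlgebra.of k G v) * ∑ᶠ v : U, MonoidAlgebra.of k G v =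
      Nat.card U • ∑ᶠ v : U, MonoidAlgebra.of k G v := by
  rw [finsum_mul' _ _ (Set.toFinite _)]
  simp_rw [U.of_mul_finsum_of_mem (Subtype.prop _)]
  exact finsum_const_eq_natCard_smul _

theorem Subgroup.average_mul_self [CharZero k] (U : Subgroup G) [Finite U] :
    U.average k * U.average k = U.average k := by
  have hU : (Nat.card U : k) ≠ 0 := Nat.cast_ne_zero.mpr Nat.card_pos.ne'
  rw [Subgroup.average, smul_mul_smul_comm, U.finsum_of_mul_finsum_of, ← Nat.cast_smul_eq_nsmul k,
    smul_smul, mul_assoc, inv_mul_cancel₀ hU, mul_one]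

/-- The push-forward along `φ` of the uniform distribution on `A` is the average of `φ.range`. -/
theorem MonoidHom.sum_single_inv_card_mul_card_preimage [CharZero k] [Fintype G] {A : Type*}
    [Group A] [Finite A] (φ : A →* G) :
    ∑ g : G, MonoidAlgebra.single g ((Nat.card A : k)⁻¹ * Nat.card (φ ⁻¹' {g})) =
      φ.range.average k := by
  have hA : Nat.card A = Nat.card φ.range * Nat.card φ.ker := by
    rw [φ.ker.card_eq_card_quotient_mul_card_subgroup,
      Nat.card_congr (QuotientGroup.quotientKerEquivRange φ).toEquiv]
  have hker : (Nat.card φ.ker : k) ≠ 0 := Nat.cast_ne_zero.mpr Nat.card_pos.ne'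
  rw [Subgroup.average, finsum_subtype_eq_sum_indicator, Finset.smul_sum]
  refine Finset.sum_congr rfl fun g _ => ?_
  by_cases hg : g ∈ φ.range
  · obtain ⟨a, rfl⟩ := hg
    rw [Nat.card_congr (φ.fiberEquivKer a), hA,
      Set.indicator_of_mem (φ.mem_range.mpr ⟨a, rfl⟩), MonoidAlgebra.of_apply,
      MonoidAlgebra.smul_single', mul_one, Nat.cast_mul, mul_inv, mul_assoc,
      inv_mul_cancel₀ hker, mul_one]
  · have : IsEmpty (φ ⁻¹' {g}) := ⟨fun a => hg ⟨a, a.2⟩⟩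
    rw [Nat.card_of_isEmpty (α := φ ⁻¹' {g}), Set.indicator_of_notMem hg, Nat.cast_zero,
      mul_zero, MonoidAlgebra.single_zero, smul_zero]

end Average

theorem gcard_eq_natCard_pi0 (C : Type*) [Category C] [Quiver.IsThin C] :
    gcard C = Nat.card (Pi0 C) := by
  have hAut (X : C) : Nat.card (Aut X) = 1 :=
    Nat.card_eq_one_iff_unique.mpr ⟨⟨fun f g => Iso.ext (Subsingleton.elim _ _)⟩, ⟨Iso.refl X⟩⟩
  simp only [gcard, hAut, Nat.cast_one, inv_one, finsum_const_eq_natCard_smul, nsmul_eq_mul,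
    mul_one]

def Pi0.equivOfSurjective {C X : Type*} [Category C] (p : C → X) (hp : Function.Surjective p)
    (hiso : ∀ x y : C, IsIsomorphic x y ↔ p x = p y) : Pi0 C ≃ X :=
  (Quotient.congr (Equiv.refl C) hiso).trans (Setoid.quotientKerEquivOfSurjective p hp)

namespace CategoryTheory

variable {C : Type*}

instance Iso.finite [Category C] (X Y : C) [Finite (X ⟶ Y)] : Finite (X ≅ Y) :=
  Finite.of_injective Iso.hom fun _ _ h => Iso.ext h

instance Aut.finite [Category C] (X : C) [Finite (X ⟶ X)] : Finite (Aut X) :=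
  Iso.finite X X

instance ObjectProperty.FullSubcategory.isThin [Category C] [Quiver.IsThin C]
    (P : ObjectProperty C) : Quiver.IsThin P.FullSubcategory :=
  fun _ _ => ⟨fun _ _ => InducedCategory.hom_ext (Subsingleton.elim _ _)⟩

theorem ObjectProperty.FullSubcategory.isIsomorphic_iff [Category C] {P : ObjectProperty C}
    {X Y : P.FullSubcategory} : IsIsomorphic X Y ↔ IsIsomorphic X.obj Y.obj :=
  ⟨fun ⟨e⟩ => ⟨P.ι.mapIso e⟩, fun ⟨e⟩ => ⟨P.fullyFaithfulι.preimageIso e⟩⟩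

theorem Groupoid.inv_comp_comp_of_comp_eq [Groupoid C] {X A B Z : C} {p : X ⟶ A} {q : A ⟶ Z}
    {r : X ⟶ B} {t : B ⟶ Z} (h : p ≫ q = r ≫ t) : (Groupoid.inv p ≫ r) ≫ t = q := by
  rw [Category.assoc, ← h, ← Category.assoc, Groupoid.inv_comp, Category.id_comp]

theorem Groupoid.comp_inv_comp [Groupoid C] {X A B : C} (p : X ⟶ A) (r : X ⟶ B) :
    p ≫ Groupoid.inv p ≫ r = r := by
  rw [← Category.assoc, Groupoid.comp_inv, Category.id_comp]

end CategoryTheory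

namespace TwoFibre

section Category

variable {S : Type*} [Category S] {c d : S}

def composite (x : TwoFibre (𝟭 S) (𝟭 S) c d) : c ⟶ d :=
  x.hom ≫ x.right.hom

def ofHom (f : c ⟶ d) : TwoFibre (𝟭 S) (𝟭 S) c d :=
  StructuredArrow.mk (Y := CostructuredArrow.mk (S := 𝟭 S) f) (𝟙 c)

@[simp]
theorem composite_ofHom (f : c ⟶ d) : (ofHom f).composite = f :=
  Category.id_comp f

theorem composite_eq_of_hom {x y : TwoFibre (𝟭 S) (𝟭 S) c d} (u : x ⟶ y) :
    x.composite = y.composite := by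
  rw [composite, composite, ← StructuredArrow.w u, ← CostructuredArrow.w u.right]
  exact (Category.assoc _ _ _).symm

theorem twoEps_one {G : Type*} [Group G] (H : GFunctor S G) (x : TwoFibre (𝟭 S) (𝟭 S) c d) :
    twoEps H H (𝟭 S) (𝟭 S) (fun _ => 1) x = H.map x.composite := by
  rw [twoEps, mul_one]
  exact (H.map_comp _ _).symm

end Category

variable {S : Type*} [Groupoid S] {c d : S}

instance isThin : Quiver.IsThin (TwoFibre (𝟭 S) (𝟭 S) c d) := fun x _ =>
  ⟨fun u v => StructuredArrow.hom_ext _ _ <| CostructuredArrow.hom_ext _ _ <|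
    (cancel_epi x.hom).mp ((StructuredArrow.w u).trans (StructuredArrow.w v).symm)⟩

def homOfCompositeEq {x y : TwoFibre (𝟭 S) (𝟭 S) c d} (h : x.composite = y.composite) :
    x ⟶ y :=
  StructuredArrow.homMk
    (CostructuredArrow.homMk (Groupoid.inv x.hom ≫ y.hom) (Groupoid.inv_comp_comp_of_comp_eq h))
    (Groupoid.comp_inv_comp x.hom y.hom)

theorem isIsomorphic_iff {x y : TwoFibre (𝟭 S) (𝟭 S) c d} :
    IsIsomorphic x y ↔ x.composite = y.composite :=
  ⟨fun ⟨e⟩ => composite_eq_of_hom e.hom, fun h =>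
    ⟨⟨homOfCompositeEq h, homOfCompositeEq h.symm, Subsingleton.elim _ _, Subsingleton.elim _ _⟩⟩⟩

end TwoFibre

section IdentitySpan

variable {S : Type*} [Groupoid S] {G : Type*} [Group G] (H : GFunctor S G)

def pi0TwoEpsFibreEquiv (c d : S) (g : G) :
    Pi0 (ObjectProperty.FullSubcategory
      (fun x : TwoFibre (𝟭 S) (𝟭 S) c d => twoEps H H (𝟭 S) (𝟭 S) (fun _ => 1) x = g)) ≃
      {f : c ⟶ d // H.map f = g} :=
  Pi0.equivOfSurjective
    (fun X => ⟨X.obj.composite, (TwoFibre.twoEps_one H X.obj).symm.trans X.property⟩)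
    (fun f => ⟨⟨TwoFibre.ofHom f.1, (TwoFibre.twoEps_one H _).trans
      ((congrArg H.map (TwoFibre.composite_ofHom f.1)).trans f.2)⟩,
      Subtype.ext (TwoFibre.composite_ofHom f.1)⟩)
    (fun _ _ => ObjectProperty.FullSubcategory.isIsomorphic_iff.trans
      (TwoFibre.isIsomorphic_iff.trans Subtype.mk_eq_mk.symm))

theorem gcard_twoEps_fibre (c d : S) (g : G) :
    gcard (ObjectProperty.FullSubcategory
      (fun x : TwoFibre (𝟭 S) (𝟭 S) c d => twoEps H H (𝟭 S) (𝟭 S) (fun _ => 1) x = g)) =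
      Nat.card {f : c ⟶ d // H.map f = g} := by
  rw [gcard_eq_natCard_pi0, Nat.card_congr (pi0TwoEpsFibreEquiv H c d g)]

def GFunctor.autHom (x : S) : Aut x →* G where
  toFun f := H.map f.hom
  map_one' := H.map_id x
  map_mul' f g := H.map_comp g.hom f.hom

end IdentitySpan

section IdentitySpanMatrix

variable {S : Type*} [Groupoid S] {G : Type*} [CommGroup G] [Fintype G] (H : GFunctor S G)

theorem spanMatrix_id_apply (c d : Pi0 S) :
    spanMatrix H H (𝟭 S) (𝟭 S) (fun _ => 1) c d =
      ∑ g : G, MonoidAlgebra.single g ((Nat.card (Aut d.out) : ℚ)⁻¹ *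
        Nat.card {f : c.out ⟶ d.out // H.map f = g}) := by
  simp only [spanMatrix, gcard_twoEps_fibre]

theorem spanMatrix_id_of_ne {c d : Pi0 S} (h : c ≠ d) :
    spanMatrix H H (𝟭 S) (𝟭 S) (fun _ => 1) c d = 0 := by
  have : IsEmpty (c.out ⟶ d.out) := ⟨fun f => h <| by
    rw [← c.out_eq, ← d.out_eq]
    exact Quotient.sound ⟨(Groupoid.isoEquivHom _ _).symm f⟩⟩
  simp [spanMatrix_id_apply]

theorem spanMatrix_id_self [∀ a : S, Finite (a ⟶ a)] (c : Pi0 S) :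
    spanMatrix H H (𝟭 S) (𝟭 S) (fun _ => 1) c c = (H.autHom c.out).range.average ℚ := by
  rw [spanMatrix_id_apply, ← MonoidHom.sum_single_inv_card_mul_card_preimage]
  refine Finset.sum_congr rfl fun g _ => ?_
  rw [Nat.card_congr ((Groupoid.isoEquivHom c.out c.out).symm.subtypeEquiv fun _ => Iff.rfl :
    {f : c.out ⟶ c.out // H.map f = g} ≃ H.autHom c.out ⁻¹' {g})]
  rfl

end IdentitySpanMatrix

theorem finsum_mul_self_eq_of_diagonal {ι R : Type*} [Semiring R] {M : ι → ι → R}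
    (hM : ∀ i j, i ≠ j → M i j = 0) (hidem : ∀ i, M i i * M i i = M i i) (i j : ι) :
    ∑ᶠ k, M k j * M i k = M i j := by
  by_cases hij : i = j
  · subst hij
    rw [finsum_eq_single _ i fun k hk => by rw [hM k i hk, zero_mul], hidem]
  · rw [hM i j hij]
    refine finsum_eq_zero_of_forall_eq_zero fun k => ?_
    by_cases hk : k = i
    · rw [hk, hM i j hij, zero_mul]
    · rw [hM i k (Ne.symm hk), mul_zero]

/-- The matrix of the identity `G`-span `(id_S, e)_*` on `(S,H)` (apex `S`, both legs the
identity functor, `ε ≡ e`) is diagonal, its diagonal entries are the averaging idempotents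
`overline{H(Aut_S(c))} = |H(Aut_S(c))|⁻¹ ∑_{g ∈ H(Aut_S(c))} g`, and the matrix is
idempotent for the matrix product `(AB)(c₁,c₂) = ∑_d B(d,c₂)·A(c₁,d)`. -/
theorem stmt7 {S : Type*} [Groupoid S]
    [Finite S] [∀ a b : S, Finite (a ⟶ b)]
    {G : Type*} [CommGroup G] [Fintype G] (H : GFunctor S G) :
    (∀ c d : Pi0 S, c ≠ d →
        spanMatrix H H (𝟭 S) (𝟭 S) (fun _ => (1 : G)) c d = 0) ∧
      (∀ c : Pi0 S,
        spanMatrix H H (𝟭 S) (𝟭 S) (fun _ => (1 : G)) c c =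
          (Nat.card (Set.range fun f : Aut (Quotient.out c) => H.map f.hom) : ℚ)⁻¹ •
            ∑ᶠ u : Set.range (fun f : Aut (Quotient.out c) => H.map f.hom),
              MonoidAlgebra.of ℚ G (u : G)) ∧
      ∀ c₁ c₂ : Pi0 S,
        ∑ᶠ d : Pi0 S,
            spanMatrix H H (𝟭 S) (𝟭 S) (fun _ => (1 : G)) d c₂ *
              spanMatrix H H (𝟭 S) (𝟭 S) (fun _ => (1 : G)) c₁ d =
          spanMatrix H H (𝟭 S) (𝟭 S) (fun _ => (1 : G)) c₁ c₂ := by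
  refine ⟨fun _ _ => spanMatrix_id_of_ne H, spanMatrix_id_self H,
    finsum_mul_self_eq_of_diagonal (fun _ _ => spanMatrix_id_of_ne H) fun c => ?_⟩
  rw [spanMatrix_id_self]
  exact Subgroup.average_mul_self _

end
end

section
/- Let G be a finite subgroup of the group of complex roots of unity (G ≤ U(1) ⊂ ℂ×), let ρ : ℚG → ℂ be the ring homomorphism induced by the inclusion G ↪ ℂ, and for a G-span (M, L, R, ε) from (S, H) to (T, V) set [[M,ε]] = ρ ∘ [M,ε]. Then for all c ∈ π₀(S) and d ∈ π₀(T), [[M,ε]](c,d) = 0 unless both H(Aut_S(c)) and V(Aut_T(d)) are trivial subgroups of G. -/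
/-!
Precomposing with an automorphism `f` of `c` (postcomposing with an automorphism `f` of `d`) is
an automorphism of the homotopy fibre `c\M/d` that multiplies `c\ε/d` by `H f` (by `V f`).
By the span condition `c\ε/d` is constant on isomorphism classes, so this automorphism maps the
level set over `g` onto the level set over `g · H f`, and the groupoid cardinalities of the level
sets form a function on `G` invariant under translation by `h₀ = H f ≠ 1` (or `V f`). Hence
`Σ_g χ_g · ρ(g)` is fixed by multiplication with `ρ(h₀) ≠ 1`, so it vanishes.
-/

open CategoryTheory

noncomputable section

section Cardinality

variable {C D : Type*} [Category C] [Category D]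

lemma CategoryTheory.Equivalence.natCard_aut (e : C ≌ D) (X : C) :
    Nat.card (Aut (e.functor.obj X)) = Nat.card (Aut X) :=
  (Nat.card_congr e.fullyFaithfulFunctor.isoEquiv).symm

variable (C) in
/-- `Skeleton C` has the same objects as `Pi0 C`, so this is a reindexing in name only. -/
lemma gcard_eq_finsum_skeleton :
    gcard C = ∑ᶠ x : Skeleton C, (Nat.card (Aut x) : ℚ)⁻¹ :=
  finsum_congr fun x => by rw [← (skeletonEquivalence C).natCard_aut x]; rfl

lemma gcard_congr (e : C ≌ D) : gcard C = gcard D := by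
  rw [gcard_eq_finsum_skeleton, gcard_eq_finsum_skeleton]
  let f := ((skeletonEquivalence C).trans e).trans (skeletonEquivalence D).symm
  calc ∑ᶠ x : Skeleton C, (Nat.card (Aut x) : ℚ)⁻¹
      = ∑ᶠ x : Skeleton C, (Nat.card (Aut (e.skeletonEquiv x)) : ℚ)⁻¹ :=
        finsum_congr fun x => by rw [← f.natCard_aut x]; rfl
    _ = ∑ᶠ y : Skeleton D, (Nat.card (Aut y) : ℚ)⁻¹ :=
        finsum_comp_equiv e.skeletonEquiv (f := fun y => (Nat.card (Aut y) : ℚ)⁻¹)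

end Cardinality

lemma gcard_fiber_mul_right {C G : Type*} [Category C] [Group G] (φ : C → G)
    (hφ : ∀ {X Y : C}, (X ⟶ Y) → φ X = φ Y) (e : C ≌ C) {g₀ : G}
    (he : ∀ X, φ (e.functor.obj X) = φ X * g₀) (g : G) :
    gcard (ObjectProperty.FullSubcategory fun X => φ X = g * g₀) =
      gcard (ObjectProperty.FullSubcategory fun X => φ X = g) := by
  have : ObjectProperty.IsClosedUnderIsomorphisms fun X => φ X = g * g₀ :=
    ⟨fun i hX => (hφ i.inv).trans hX⟩
  refine (gcard_congr (e.congrFullSubcategory ?_)).symm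
  ext X
  change φ (e.functor.obj X) = g * g₀ ↔ φ X = g
  rw [he, mul_left_inj]

section TwoFibre

variable {S T M : Type*} [Category S] [Category T] [Category M]
  (L : M ⥤ S) (R : M ⥤ T) {c : S} {d : T}

def TwoFibre.shiftLeft (f : c ≅ c) : TwoFibre L R c d ≌ TwoFibre L R c d :=
  StructuredArrow.mapIso f.symm

/-- This typechecks because `(CostructuredArrow.mapIso f).functor ⋙ CostructuredArrow.proj R d`
is definitionally `CostructuredArrow.proj R d`. -/
def TwoFibre.shiftRight (f : d ≅ d) : TwoFibre L R c d ≌ TwoFibre L R c d :=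
  (StructuredArrow.pre c (CostructuredArrow.mapIso (S := R) f).functor
      (CostructuredArrow.proj R d ⋙ L)).asEquivalence

section Group

variable {G : Type*} [Group G] (H : GFunctor S G) (V : GFunctor T G) (ε : M → G)

lemma twoEps_eq_of_hom
    (hε : ∀ {a b : M} (m : a ⟶ b), ε b * H.map (L.map m) = V.map (R.map m) * ε a)
    {x y : TwoFibre L R c d} (m : x ⟶ y) : twoEps H V L R ε x = twoEps H V L R ε y := by
  have hs : H.map y.hom = H.map (L.map m.right.left) * H.map x.hom :=
    (congrArg H.map (StructuredArrow.w m)).symm.trans (H.map_comp _ _)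
  have ht : R.map m.right.left ≫ y.right.hom = x.right.hom := CostructuredArrow.w m.right
  calc twoEps H V L R ε x
      = V.map y.right.hom * (V.map (R.map m.right.left) * ε x.right.left) * H.map x.hom := by
        rw [twoEps, ← ht, V.map_comp, mul_assoc (V.map _)]
    _ = V.map y.right.hom * (ε y.right.left * H.map (L.map m.right.left)) * H.map x.hom := by
        rw [hε]
    _ = twoEps H V L R ε y := by
        simp only [twoEps, hs, mul_assoc]

end Group

variable {G : Type*} [CommGroup G] (H : GFunctor S G) (V : GFunctor T G) (ε : M → G)

lemma twoEps_shiftLeft (f : c ≅ c) (x : TwoFibre L R c d) :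
    twoEps H V L R ε ((TwoFibre.shiftLeft L R f).functor.obj x) =
      twoEps H V L R ε x * H.map f.hom := by
  change V.map x.right.hom * ε x.right.left * H.map (f.hom ≫ x.hom) = _
  simp only [twoEps, H.map_comp, mul_assoc]

lemma twoEps_shiftRight (f : d ≅ d) (x : TwoFibre L R c d) :
    twoEps H V L R ε ((TwoFibre.shiftRight L R f).functor.obj x) =
      twoEps H V L R ε x * V.map f.hom := by
  change V.map (x.right.hom ≫ f.hom) * ε x.right.left * H.map x.hom = _
  rw [V.map_comp, twoEps]
  ac_rfl

variable (hε : ∀ {a b : M} (m : a ⟶ b), ε b * H.map (L.map m) = V.map (R.map m) * ε a)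
include hε

lemma gcard_twoEps_fiber_mul_source_aut (f : c ≅ c) (g : G) :
    gcard (ObjectProperty.FullSubcategory fun x : TwoFibre L R c d =>
        twoEps H V L R ε x = g * H.map f.hom) =
      gcard (ObjectProperty.FullSubcategory fun x : TwoFibre L R c d => twoEps H V L R ε x = g) :=
  gcard_fiber_mul_right _ (twoEps_eq_of_hom L R H V ε hε) (TwoFibre.shiftLeft L R f)
    (twoEps_shiftLeft L R H V ε f) g

lemma gcard_twoEps_fiber_mul_target_aut (f : d ≅ d) (g : G) :
    gcard (ObjectProperty.FullSubcategory fun x : TwoFibre L R c d =>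
        twoEps H V L R ε x = g * V.map f.hom) =
      gcard (ObjectProperty.FullSubcategory fun x : TwoFibre L R c d => twoEps H V L R ε x = g) :=
  gcard_fiber_mul_right _ (twoEps_eq_of_hom L R H V ε hε) (TwoFibre.shiftRight L R f)
    (twoEps_shiftRight L R H V ε f) g

end TwoFibre

lemma Fintype.sum_smul_eq_zero_of_mul_right_invariant {G k A : Type*} [Group G] [Fintype G]
    [CommSemiring k] [Ring A] [NoZeroDivisors A] [Algebra k A] (ψ : G →* A) {g₀ : G}
    (hg₀ : ψ g₀ ≠ 1) {f : G → k} (hf : ∀ g, f (g * g₀) = f g) : ∑ g, f g • ψ g = 0 := by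
  have hinv : (∑ g, f g • ψ g) * ψ g₀ = ∑ g, f g • ψ g := by
    simp only [Finset.sum_mul, smul_mul_assoc, ← map_mul]
    exact Fintype.sum_equiv (Equiv.mulRight g₀) _ _ fun g => by
      simp only [Equiv.coe_mulRight, hf]
  have : (∑ g, f g • ψ g) * (ψ g₀ - 1) = 0 := by rw [mul_sub, mul_one, hinv, sub_self]
  exact (mul_eq_zero.mp this).resolve_right (sub_ne_zero.mpr hg₀)

/-- Corollary: let `G` be a finite subgroup of the group of complex roots of unity
(`G ≤ U(1) ⊂ ℂˣ`), let `ρ : ℚG → ℂ` be the ring homomorphism induced by the inclusion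
`G ↪ ℂ`, and set `[[M,ε]] = ρ ∘ [M,ε]`.  Then `[[M,ε]](c,d) = 0` unless both `H(Aut_S(c))`
and `V(Aut_T(d))` are trivial. -/
theorem stmt10 (K : Subgroup ℂˣ) [Fintype K]
    (hK : ∀ z : K, ∃ n : ℕ, 0 < n ∧ (z : ℂˣ) ^ n = 1)
    {S T M : Type*} [Groupoid S] [Groupoid T] [Groupoid M]
    [Finite S] [∀ a b : S, Finite (a ⟶ b)]
    [Finite T] [∀ a b : T, Finite (a ⟶ b)]
    [Finite M] [∀ a b : M, Finite (a ⟶ b)]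
    (H : GFunctor S ↥K) (V : GFunctor T ↥K)
    (L : M ⥤ S) (R : M ⥤ T) (ε : M → ↥K)
    (hε : ∀ {a b : M} (m : a ⟶ b), ε b * H.map (L.map m) = V.map (R.map m) * ε a)
    (c : Pi0 S) (d : Pi0 T)
    (h : (∃ f : Aut (Quotient.out c), H.map f.hom ≠ 1) ∨
      (∃ f : Aut (Quotient.out d), V.map f.hom ≠ 1)) :
    MonoidAlgebra.lift ℚ ℂ ↥K ((Units.coeHom ℂ).comp K.subtype)
        (spanMatrix H V L R ε c d) = 0 := by
  obtain ⟨g₀, hg₀, hχ⟩ : ∃ g₀ : K, g₀ ≠ 1 ∧ ∀ g,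
      gcard (ObjectProperty.FullSubcategory fun x : TwoFibre L R c.out d.out =>
          twoEps H V L R ε x = g * g₀) =
        gcard (ObjectProperty.FullSubcategory fun x : TwoFibre L R c.out d.out =>
          twoEps H V L R ε x = g) := by
    rcases h with ⟨f, hf⟩ | ⟨f, hf⟩
    · exact ⟨_, hf, gcard_twoEps_fiber_mul_source_aut L R H V ε hε f⟩
    · exact ⟨_, hf, gcard_twoEps_fiber_mul_target_aut L R H V ε hε f⟩
  have hρ : (Units.coeHom ℂ).comp K.subtype g₀ ≠ 1 :=
    (map_ne_one_iff _ (Units.val_injective.comp Subtype.val_injective)).mpr hg₀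
  rw [spanMatrix, map_sum]
  simp only [MonoidAlgebra.lift_single]
  exact Fintype.sum_smul_eq_zero_of_mul_right_invariant _ hρ fun g => by rw [hχ]
end
end
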